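/- arXiv:0907.3312 — 5 statements merged into one kernel-verified Lean document; each statement's English description precedes it below -/
import Mathlib

section
/- For all n×n matrices A and B with non-negative real entries, the spectral radius of their Hadamard product is at most the square root of the spectral radius of (A∘A)(B∘B), which in turn is at most the spectral radius of the ordinary matrix product AB: ρ(A∘B) ≤ ρ((A∘A)(B∘B))^{1/2} ≤ ρ(AB). -/
open Matrix Filter

/-- The spectral radius of a real square matrix: the largest modulus of its
complex eigenvalues, i.e. the supremum of the moduli of the elements of the
spectrum of the matrix viewed as a complex matrix. -/
noncomputable def specRad {n : ℕ} (A : Matrix (Fin n) (Fin n) ℝ) : ℝ :=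
  sSup {r : ℝ | ∃ μ ∈ spectrum ℂ (A.map (fun a => (a : ℂ))), ‖μ‖ = r}

/-!
By Gelfand's formula `ρ(X) = lim ‖X ^ k‖ ^ (1 / k)`, both inequalities follow from bounds on the
(row-sum) norms of powers. By Cauchy–Schwarz, an entrywise domination `Xᵢⱼ² ≤ Yᵢⱼ Zᵢⱼ` with
`Y, Z ≥ 0` survives matrix multiplication, hence passes to powers and gives
`‖X ^ k‖² ≤ ‖Y ^ k‖ ‖Z ^ k‖`. For `X = (A ∘ B)²`, `Y = (A ∘ A)(B ∘ B)`, `Z = (B ∘ B)(A ∘ A)`,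
where `ρ(Y) = ρ(Z)`, this yields `ρ(A ∘ B)⁴ ≤ ρ(Y)²`. Likewise, for non-negative matrices the
domination `Xᵢⱼ ≤ Yᵢⱼ Zᵢⱼ` survives multiplication; as `(A ∘ A)(B ∘ B) ≤ (AB) ∘ (AB)` entrywise,
this yields `ρ((A ∘ A)(B ∘ B)) ≤ ρ(AB)²`.
-/

open Topology

attribute [local instance] Matrix.linftyOpSeminormedAddCommGroup
  Matrix.linftyOpNormedRing Matrix.linftyOpNormedAlgebra

lemma Finset.sum_mul_le_sum_mul_sum {κ R : Type*} [CommSemiring R] [PartialOrder R]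
    [IsOrderedRing R] (s : Finset κ) {f g : κ → R} (hf : ∀ i ∈ s, 0 ≤ f i)
    (hg : ∀ i ∈ s, 0 ≤ g i) : ∑ i ∈ s, f i * g i ≤ (∑ i ∈ s, f i) * ∑ i ∈ s, g i := by
  rw [Finset.sum_mul]
  exact Finset.sum_le_sum fun i hi =>
    mul_le_mul_of_nonneg_left (Finset.single_le_sum hg hi) (hf i hi)

namespace Matrix

section LinftyNorm

variable {m k α : Type*} [Fintype m] [Fintype k] [SeminormedAddCommGroup α]

lemma linfty_opNorm_le_iff {X : Matrix m k α} {c : ℝ} (hc : 0 ≤ c) :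
    ‖X‖ ≤ c ↔ ∀ i, ∑ j, ‖X i j‖ ≤ c := by
  lift c to NNReal using hc
  rw [linfty_opNorm_def, NNReal.coe_le_coe, Finset.sup_le_iff]
  simp [← NNReal.coe_le_coe]

lemma sum_norm_apply_le_linfty_opNorm (X : Matrix m k α) (i : m) : ∑ j, ‖X i j‖ ≤ ‖X‖ :=
  (linfty_opNorm_le_iff (norm_nonneg X)).1 le_rfl i

lemma linfty_opNorm_le_mul_of_norm_apply_le {X Y Z : Matrix m k α}
    (h : ∀ i j, ‖X i j‖ ≤ ‖Y i j‖ * ‖Z i j‖) : ‖X‖ ≤ ‖Y‖ * ‖Z‖ := by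
  refine (linfty_opNorm_le_iff (by positivity)).2 fun i => ?_
  calc ∑ j, ‖X i j‖ ≤ ∑ j, ‖Y i j‖ * ‖Z i j‖ := Finset.sum_le_sum fun j _ => h i j
    _ ≤ (∑ j, ‖Y i j‖) * ∑ j, ‖Z i j‖ :=
      Finset.sum_mul_le_sum_mul_sum _ (fun _ _ => norm_nonneg _) fun _ _ => norm_nonneg _
    _ ≤ ‖Y‖ * ‖Z‖ := mul_le_mul (sum_norm_apply_le_linfty_opNorm Y i)
      (sum_norm_apply_le_linfty_opNorm Z i) (by positivity) (norm_nonneg _)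

lemma sq_linfty_opNorm_le_mul_of_sq_norm_apply_le {X Y Z : Matrix m k α}
    (h : ∀ i j, ‖X i j‖ ^ 2 ≤ ‖Y i j‖ * ‖Z i j‖) : ‖X‖ ^ 2 ≤ ‖Y‖ * ‖Z‖ := by
  rw [← Real.le_sqrt (norm_nonneg _) (by positivity)]
  refine (linfty_opNorm_le_iff (Real.sqrt_nonneg _)).2 fun i => ?_
  rw [Real.le_sqrt (by positivity) (by positivity)]
  calc (∑ j, ‖X i j‖) ^ 2 ≤ (∑ j, ‖Y i j‖) * ∑ j, ‖Z i j‖ :=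
        Finset.sum_sq_le_sum_mul_sum_of_sq_le_mul _ (fun _ _ => norm_nonneg _)
          (fun _ _ => norm_nonneg _) fun j _ => h i j
    _ ≤ ‖Y‖ * ‖Z‖ := mul_le_mul (sum_norm_apply_le_linfty_opNorm Y i)
      (sum_norm_apply_le_linfty_opNorm Z i) (by positivity) (norm_nonneg _)

lemma linfty_opNorm_map_ofReal (M : Matrix m k ℝ) : ‖M.map (fun a => (a : ℂ))‖ = ‖M‖ := by
  simp [linfty_opNorm_def, Complex.nnnorm_real]

end LinftyNorm

section Entrywise

variable {ι : Type*} [Fintype ι]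

lemma mul_apply_nonneg {R : Type*} [Semiring R] [PartialOrder R] [IsOrderedRing R]
    {X Y : Matrix ι ι R} (hX : ∀ i j, 0 ≤ X i j) (hY : ∀ i j, 0 ≤ Y i j) (i j : ι) :
    0 ≤ (X * Y) i j :=
  Finset.sum_nonneg fun t _ => mul_nonneg (hX i t) (hY t j)

variable {X X' Y Y' Z Z' : Matrix ι ι ℝ}

lemma mul_apply_le_of_apply_le_mul (hY : ∀ i j, 0 ≤ Y i j) (hZ : ∀ i j, 0 ≤ Z i j)
    (hY' : ∀ i j, 0 ≤ Y' i j) (hZ' : ∀ i j, 0 ≤ Z' i j) (hX' : ∀ i j, 0 ≤ X' i j)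
    (h : ∀ i j, X i j ≤ Y i j * Z i j) (h' : ∀ i j, X' i j ≤ Y' i j * Z' i j) (i j : ι) :
    (X * X') i j ≤ (Y * Y') i j * (Z * Z') i j :=
  calc ∑ t, X i t * X' t j ≤ ∑ t, (Y i t * Y' t j) * (Z i t * Z' t j) :=
        Finset.sum_le_sum fun t _ =>
          calc X i t * X' t j ≤ (Y i t * Z i t) * (Y' t j * Z' t j) :=
                mul_le_mul (h i t) (h' t j) (hX' t j) (mul_nonneg (hY i t) (hZ i t))
            _ = (Y i t * Y' t j) * (Z i t * Z' t j) := by ring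
    _ ≤ _ := Finset.sum_mul_le_sum_mul_sum _ (fun t _ => mul_nonneg (hY i t) (hY' t j))
          fun t _ => mul_nonneg (hZ i t) (hZ' t j)

lemma sq_mul_apply_le_of_sq_apply_le_mul (hY : ∀ i j, 0 ≤ Y i j) (hZ : ∀ i j, 0 ≤ Z i j)
    (hY' : ∀ i j, 0 ≤ Y' i j) (hZ' : ∀ i j, 0 ≤ Z' i j)
    (h : ∀ i j, X i j ^ 2 ≤ Y i j * Z i j) (h' : ∀ i j, X' i j ^ 2 ≤ Y' i j * Z' i j)
    (i j : ι) : (X * X') i j ^ 2 ≤ (Y * Y') i j * (Z * Z') i j :=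
  Finset.sum_sq_le_sum_mul_sum_of_sq_le_mul _ (fun t _ => mul_nonneg (hY i t) (hY' t j))
    (fun t _ => mul_nonneg (hZ i t) (hZ' t j)) fun t _ =>
    calc (X i t * X' t j) ^ 2 = X i t ^ 2 * X' t j ^ 2 := mul_pow _ _ _
      _ ≤ (Y i t * Z i t) * (Y' t j * Z' t j) :=
        mul_le_mul (h i t) (h' t j) (sq_nonneg _) (mul_nonneg (hY i t) (hZ i t))
      _ = (Y i t * Y' t j) * (Z i t * Z' t j) := by ring

variable [DecidableEq ι]

lemma pow_apply_le_of_apply_le_mul (hY : ∀ i j, 0 ≤ Y i j) (hZ : ∀ i j, 0 ≤ Z i j)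
    (hX : ∀ i j, 0 ≤ X i j) (h : ∀ i j, X i j ≤ Y i j * Z i j) (k : ℕ) (i j : ι) :
    (X ^ k) i j ≤ (Y ^ k) i j * (Z ^ k) i j := by
  induction k generalizing i j with
  | zero => by_cases hij : i = j <;> simp [hij]
  | succ k ih =>
    simp only [pow_succ]
    exact mul_apply_le_of_apply_le_mul (pow_apply_nonneg hY k) (pow_apply_nonneg hZ k) hY hZ
      hX ih h i j

lemma sq_pow_apply_le_of_sq_apply_le_mul (hY : ∀ i j, 0 ≤ Y i j) (hZ : ∀ i j, 0 ≤ Z i j)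
    (h : ∀ i j, X i j ^ 2 ≤ Y i j * Z i j) (k : ℕ) (i j : ι) :
    (X ^ k) i j ^ 2 ≤ (Y ^ k) i j * (Z ^ k) i j := by
  induction k generalizing i j with
  | zero => by_cases hij : i = j <;> simp [hij]
  | succ k ih =>
    simp only [pow_succ]
    exact sq_mul_apply_le_of_sq_apply_le_mul (pow_apply_nonneg hY k) (pow_apply_nonneg hZ k)
      hY hZ ih h i j

lemma norm_pow_le_mul_of_apply_le_mul (hY : ∀ i j, 0 ≤ Y i j) (hZ : ∀ i j, 0 ≤ Z i j)
    (hX : ∀ i j, 0 ≤ X i j) (h : ∀ i j, X i j ≤ Y i j * Z i j) (k : ℕ) :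
    ‖X ^ k‖ ≤ ‖Y ^ k‖ * ‖Z ^ k‖ :=
  linfty_opNorm_le_mul_of_norm_apply_le fun i j => by
    simpa only [Real.norm_of_nonneg (pow_apply_nonneg hX k i j),
      Real.norm_of_nonneg (pow_apply_nonneg hY k i j),
      Real.norm_of_nonneg (pow_apply_nonneg hZ k i j)] using
      pow_apply_le_of_apply_le_mul hY hZ hX h k i j

lemma sq_norm_pow_le_mul_of_sq_apply_le_mul (hY : ∀ i j, 0 ≤ Y i j) (hZ : ∀ i j, 0 ≤ Z i j)
    (h : ∀ i j, X i j ^ 2 ≤ Y i j * Z i j) (k : ℕ) : ‖X ^ k‖ ^ 2 ≤ ‖Y ^ k‖ * ‖Z ^ k‖ :=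
  sq_linfty_opNorm_le_mul_of_sq_norm_apply_le fun i j => by
    simpa only [Real.norm_eq_abs, sq_abs, abs_of_nonneg (pow_apply_nonneg hY k i j),
      abs_of_nonneg (pow_apply_nonneg hZ k i j)] using
      sq_pow_apply_le_of_sq_apply_le_mul hY hZ h k i j

end Entrywise

end Matrix

namespace spectrum

variable {𝕜 A : Type*} [NormedField 𝕜] [Ring A] [Algebra 𝕜 A]

lemma spectralRadius_eq_biSup_diff_zero (a : A) :
    spectralRadius 𝕜 a = ⨆ μ ∈ spectrum 𝕜 a \ {0}, (‖μ‖₊ : ENNReal) := by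
  refine le_antisymm (iSup₂_le fun μ hμ => ?_) (biSup_mono fun μ hμ => hμ.1)
  rcases eq_or_ne μ 0 with rfl | h0
  · simp
  · exact le_iSup₂ (f := fun μ (_ : μ ∈ spectrum 𝕜 a \ {0}) => (‖μ‖₊ : ENNReal)) μ ⟨hμ, h0⟩

lemma spectralRadius_mul_comm (a b : A) : spectralRadius 𝕜 (a * b) = spectralRadius 𝕜 (b * a) := by
  rw [spectralRadius_eq_biSup_diff_zero, spectralRadius_eq_biSup_diff_zero, nonzero_mul_comm]

end spectrum

section SpecRad

variable {n : ℕ}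

lemma specRad_eq_toReal_spectralRadius (M : Matrix (Fin n) (Fin n) ℝ) :
    specRad M = (spectralRadius ℂ (M.map (fun a => (a : ℂ)))).toReal := by
  rw [spectralRadius, ← sSup_image, ENNReal.toReal_sSup _ (by simp), Set.image_image]
  simp [specRad, Set.image]

lemma specRad_nonneg (M : Matrix (Fin n) (Fin n) ℝ) : 0 ≤ specRad M := by
  rw [specRad_eq_toReal_spectralRadius]
  exact ENNReal.toReal_nonneg

lemma specRad_mul_comm (M N : Matrix (Fin n) (Fin n) ℝ) : specRad (M * N) = specRad (N * M) := by
  have h (X Y : Matrix (Fin n) (Fin n) ℝ) : (X * Y).map (fun a => (a : ℂ)) =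
      X.map (fun a => (a : ℂ)) * Y.map (fun a => (a : ℂ)) :=
    map_mul Complex.ofRealHom.mapMatrix X Y
  rw [specRad_eq_toReal_spectralRadius, specRad_eq_toReal_spectralRadius, h, h,
    spectrum.spectralRadius_mul_comm]

lemma tendsto_norm_pow_rpow_specRad (M : Matrix (Fin n) (Fin n) ℝ) :
    Tendsto (fun k : ℕ => ‖M ^ k‖ ^ (1 / k : ℝ)) atTop (𝓝 (specRad M)) := by
  set Mc := M.map (fun a => (a : ℂ))
  have hfin : spectralRadius ℂ Mc ≠ ⊤ :=
    ((spectrum.spectralRadius_le_pow_nnnorm_pow_one_div ℂ Mc 0).trans_lt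
      (by simp [ENNReal.mul_lt_top])).ne
  rw [specRad_eq_toReal_spectralRadius]
  refine ((ENNReal.tendsto_toReal hfin).comp
    (spectrum.pow_norm_pow_one_div_tendsto_nhds_spectralRadius Mc)).congr fun k => ?_
  have hpow : Mc ^ k = (M ^ k).map (fun a => (a : ℂ)) :=
    (map_pow Complex.ofRealHom.mapMatrix M k).symm
  simp [hpow, linfty_opNorm_map_ofReal, ENNReal.toReal_ofReal, Real.rpow_nonneg]

lemma specRad_pow (M : Matrix (Fin n) (Fin n) ℝ) {m : ℕ} (hm : m ≠ 0) :
    specRad (M ^ m) = specRad M ^ m := by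
  have h₁ : Tendsto (fun k : ℕ => ‖M ^ (m * k)‖ ^ (1 / k : ℝ)) atTop (𝓝 (specRad (M ^ m))) := by
    simpa only [pow_mul] using tendsto_norm_pow_rpow_specRad (M ^ m)
  have h₂ : Tendsto (fun k : ℕ => ‖M ^ (m * k)‖ ^ (1 / k : ℝ)) atTop (𝓝 (specRad M ^ m)) := by
    refine (((tendsto_norm_pow_rpow_specRad M).comp
      (tendsto_id.const_mul_atTop' (Nat.pos_of_ne_zero hm))).pow m).congr fun k => ?_
    rw [Function.comp_apply, id, ← Real.rpow_mul_natCast (norm_nonneg _)]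
    congr 1
    rcases eq_or_ne k 0 with rfl | hk
    · simp
    · push_cast
      field_simp
  exact tendsto_nhds_unique h₁ h₂

lemma specRad_pow_le_mul_of_norm_pow_le {X Y Z : Matrix (Fin n) (Fin n) ℝ} (m : ℕ)
    (h : ∀ k, ‖X ^ k‖ ^ m ≤ ‖Y ^ k‖ * ‖Z ^ k‖) : specRad X ^ m ≤ specRad Y * specRad Z := by
  refine le_of_tendsto_of_tendsto' ((tendsto_norm_pow_rpow_specRad X).pow m)
    ((tendsto_norm_pow_rpow_specRad Y).mul (tendsto_norm_pow_rpow_specRad Z)) fun k => ?_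
  rw [Real.rpow_pow_comm (norm_nonneg _), ← Real.mul_rpow (norm_nonneg _) (norm_nonneg _)]
  exact Real.rpow_le_rpow (by positivity) (h k) (by positivity)

end SpecRad

theorem spectral_radius_hadamard_le {n : ℕ} (A B : Matrix (Fin n) (Fin n) ℝ)
    (hA : ∀ i j, 0 ≤ A i j) (hB : ∀ i j, 0 ≤ B i j) :
    specRad (A.hadamard B) ≤ Real.sqrt (specRad ((A.hadamard A) * (B.hadamard B))) ∧
    Real.sqrt (specRad ((A.hadamard A) * (B.hadamard B))) ≤ specRad (A * B) := by
  have hAA : ∀ i j, 0 ≤ (A ⊙ A) i j := fun i j => mul_self_nonneg (A i j)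
  have hBB : ∀ i j, 0 ≤ (B ⊙ B) i j := fun i j => mul_self_nonneg (B i j)
  have hC := mul_apply_nonneg hAA hBB
  constructor
  · have hsq (i j : Fin n) : (A ⊙ B) i j ^ 2 = (A ⊙ A) i j * (B ⊙ B) i j := by
      simp only [hadamard_apply]
      ring
    have hCD := specRad_pow_le_mul_of_norm_pow_le 2 <|
      sq_norm_pow_le_mul_of_sq_apply_le_mul hC (mul_apply_nonneg hBB hAA) <|
        sq_mul_apply_le_of_sq_apply_le_mul hAA hBB hBB hAA (fun i j => (hsq i j).le)
          fun i j => (hsq i j).trans_le (mul_comm _ _).le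
    rw [← sq, specRad_pow _ two_ne_zero, specRad_mul_comm (B ⊙ B), ← sq,
      pow_le_pow_iff_left₀ (pow_nonneg (specRad_nonneg _) 2) (specRad_nonneg _)
        two_ne_zero] at hCD
    exact (Real.le_sqrt (specRad_nonneg _) (specRad_nonneg _)).2 hCD
  · have hAB := specRad_pow_le_mul_of_norm_pow_le 1 fun k => (pow_one _).trans_le <|
      norm_pow_le_mul_of_apply_le_mul (mul_apply_nonneg hA hB) (mul_apply_nonneg hA hB) hC
        (mul_apply_le_of_apply_le_mul hA hA hB hB hBB (fun _ _ => le_rfl) fun _ _ => le_rfl) k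
    rw [pow_one, ← sq] at hAB
    exact Real.sqrt_le_iff.2 ⟨specRad_nonneg _, hAB⟩
end

section
/- For every n×n real matrix A all of whose entries are strictly positive, the sequence (Tr(A^m))^{1/m} converges to the spectral radius ρ(A) as m → ∞. -/
open Matrix Filter

/-!
Write `‖·‖` for the `ℓ∞` operator norm. If all entries of `A` are at least `ε > 0`, then
`n ε² ‖M‖ ≤ Tr (A M A)` for every entrywise nonnegative `M`, while `Tr M ≤ n ‖M‖` for every `M`.
Hence `n ε² ‖A ^ m‖ ≤ Tr (A ^ (m + 2)) ≤ n ‖A ^ (m + 2)‖`, and after taking `(m + 2)`-th roots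
both bounds tend to `ρ(A)` by Gelfand's formula `‖A ^ m‖ ^ (1 / m) → ρ(A)`.
-/

open scoped ENNReal Topology

section GelfandFormula

variable {B : Type*} [NormedRing B] [NormedAlgebra ℂ B] [CompleteSpace B]

lemma spectralRadius_ne_top (b : B) : spectralRadius ℂ b ≠ ⊤ := by
  nontriviality B
  obtain ⟨z, -, hz⟩ := spectrum.exists_nnnorm_eq_spectralRadius b
  exact hz ▸ ENNReal.coe_ne_top

lemma sSup_norm_spectrum_eq_toReal_spectralRadius (b : B) :
    sSup {r : ℝ | ∃ μ ∈ spectrum ℂ b, ‖μ‖ = r} = (spectralRadius ℂ b).toReal := by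
  nontriviality B using spectrum.of_subsingleton, Real.sSup_empty
  obtain ⟨z, hz, hzb⟩ := spectrum.exists_nnnorm_eq_spectralRadius b
  have hmax : IsGreatest {r : ℝ | ∃ μ ∈ spectrum ℂ b, ‖μ‖ = r} ‖z‖ := by
    refine ⟨⟨z, hz, rfl⟩, ?_⟩
    rintro _ ⟨μ, hμ, rfl⟩
    have : (‖μ‖₊ : ℝ≥0∞) ≤ ‖z‖₊ := hzb ▸ le_iSup₂ (α := ℝ≥0∞) μ hμ
    exact_mod_cast this
  rw [hmax.csSup_eq, ← hzb]
  rfl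

lemma tendsto_norm_pow_rpow_inv_toReal_spectralRadius (b : B) :
    Tendsto (fun m : ℕ => ‖b ^ m‖ ^ (m : ℝ)⁻¹) atTop (𝓝 (spectralRadius ℂ b).toReal) := by
  have h := (ENNReal.tendsto_toReal (spectralRadius_ne_top b)).comp
    (spectrum.pow_norm_pow_one_div_tendsto_nhds_spectralRadius b)
  refine h.congr fun m => ?_
  simp [ENNReal.toReal_ofReal, Real.rpow_nonneg]

end GelfandFormula

attribute [local instance] Matrix.linftyOpSeminormedAddCommGroup Matrix.linftyOpNormedRing
  Matrix.linftyOpNormedAlgebra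

namespace Matrix

variable {ι κ : Type*} [Fintype ι] [Fintype κ]

lemma norm_entry_le_linfty_opNorm {α : Type*} [SeminormedAddCommGroup α] (M : Matrix ι κ α)
    (i : ι) (j : κ) : ‖M i j‖ ≤ ‖M‖ := by
  have hrow : ∑ j, ‖M i j‖₊ ≤ ‖M‖₊ :=
    linfty_opNNNorm_def M ▸ Finset.le_sup (f := fun i => ∑ j, ‖M i j‖₊) (Finset.mem_univ i)
  exact_mod_cast (Finset.single_le_sum (fun _ _ => zero_le) (Finset.mem_univ j)).trans hrow

lemma linfty_opNorm_map_ofReal_s4 (M : Matrix ι κ ℝ) : ‖M.map ((↑) : ℝ → ℂ)‖ = ‖M‖ := by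
  simp only [linfty_opNorm_def, map_apply, Complex.nnnorm_real]

lemma norm_trace_le_card_mul_linfty_opNorm {α : Type*} [SeminormedAddCommGroup α]
    (M : Matrix ι ι α) : ‖M.trace‖ ≤ Fintype.card ι * ‖M‖ :=
  calc ‖M.trace‖ ≤ ∑ i, ‖M i i‖ := norm_sum_le _ _
    _ ≤ ∑ _i : ι, ‖M‖ := Finset.sum_le_sum fun i _ => norm_entry_le_linfty_opNorm M i i
    _ = Fintype.card ι * ‖M‖ := by simp

lemma linfty_opNorm_le_sum_of_nonneg (M : Matrix ι κ ℝ) (hM : ∀ i j, 0 ≤ M i j) :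
    ‖M‖ ≤ ∑ i, ∑ j, M i j := by
  have hsup : ‖M‖₊ ≤ ∑ i, ∑ j, ‖M i j‖₊ := linfty_opNNNorm_def M ▸
    Finset.sup_le fun i _ => Finset.single_le_sum (f := fun i => ∑ j, ‖M i j‖₊)
      (fun _ _ => zero_le) (Finset.mem_univ i)
  have : ‖M‖ ≤ ∑ i, ∑ j, ‖M i j‖ := by simpa using NNReal.coe_le_coe.mpr hsup
  simpa [Real.norm_of_nonneg (hM _ _)] using this

lemma card_mul_sq_mul_linfty_opNorm_le_trace_mul_mul {A M : Matrix ι ι ℝ} {ε : ℝ} (hε : 0 ≤ ε)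
    (hA : ∀ i j, ε ≤ A i j) (hM : ∀ i j, 0 ≤ M i j) :
    Fintype.card ι * ε ^ 2 * ‖M‖ ≤ (A * M * A).trace := by
  have hentry : ∀ i j k, ε ^ 2 * M j k ≤ A i j * M j k * A k i := fun i j k =>
    calc ε ^ 2 * M j k = ε * M j k * ε := by ring
      _ ≤ A i j * M j k * A k i :=
        mul_le_mul (mul_le_mul_of_nonneg_right (hA i j) (hM j k)) (hA k i) hε
          (mul_nonneg (hε.trans (hA i j)) (hM j k))
  calc Fintype.card ι * ε ^ 2 * ‖M‖
      ≤ ∑ _i : ι, ε ^ 2 * ∑ j, ∑ k, M j k := by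
        rw [Finset.sum_const, Finset.card_univ, nsmul_eq_mul, mul_assoc]
        gcongr
        exact linfty_opNorm_le_sum_of_nonneg M hM
    _ ≤ ∑ i, ∑ j, ∑ k, A i j * M j k * A k i := by
        gcongr with i
        rw [Finset.mul_sum]
        gcongr with j
        rw [Finset.mul_sum]
        exact Finset.sum_le_sum fun k _ => hentry i j k
    _ = (A * M * A).trace := by
        simp only [trace, diag, mul_apply, Finset.sum_mul]
        exact Finset.sum_congr rfl fun i _ => Finset.sum_comm

end Matrix

namespace Filter.Tendsto

variable {u : ℕ → ℝ} {r : ℝ}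

lemma const_mul_rpow_inv_natCast (h : Tendsto (fun m : ℕ => u m ^ (m : ℝ)⁻¹) atTop (𝓝 r))
    (hu : ∀ m, 0 ≤ u m) {c : ℝ} (hc : 0 < c) :
    Tendsto (fun m : ℕ => (c * u m) ^ (m : ℝ)⁻¹) atTop (𝓝 r) := by
  have hc1 : Tendsto (fun m : ℕ => c ^ (m : ℝ)⁻¹) atTop (𝓝 1) := by
    simpa using tendsto_const_nhds.rpow tendsto_inv_atTop_nhds_zero_nat (Or.inl hc.ne')
  simpa [Real.mul_rpow hc.le (hu _)] using hc1.mul h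

lemma rpow_inv_natCast_add (h : Tendsto (fun m : ℕ => u m ^ (m : ℝ)⁻¹) atTop (𝓝 r))
    (hu : ∀ m, 0 ≤ u m) (k : ℕ) :
    Tendsto (fun m : ℕ => u m ^ ((m + k : ℕ) : ℝ)⁻¹) atTop (𝓝 r) := by
  have hratio : Tendsto (fun m : ℕ => (m : ℝ) / (m + k)) atTop (𝓝 1) :=
    tendsto_natCast_div_add_atTop (k : ℝ)
  have hlim : Tendsto (fun m : ℕ => (u m ^ (m : ℝ)⁻¹) ^ ((m : ℝ) / (m + k))) atTop (𝓝 r) := by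
    simpa using h.rpow hratio (Or.inr one_pos)
  refine hlim.congr' ?_
  filter_upwards [eventually_ne_atTop 0] with m hm
  rw [← Real.rpow_mul (hu m)]
  congr 1
  field_simp
  push_cast
  ring

end Filter.Tendsto

lemma tendsto_linfty_opNorm_pow_rpow_inv_specRad {n : ℕ} (A : Matrix (Fin n) (Fin n) ℝ) :
    Tendsto (fun m : ℕ => ‖A ^ m‖ ^ (m : ℝ)⁻¹) atTop (𝓝 (specRad A)) := by
  have hmap (m : ℕ) : (A.map ((↑) : ℝ → ℂ)) ^ m = (A ^ m).map (↑) :=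
    (A.map_pow Complex.ofRealHom m).symm
  rw [specRad, sSup_norm_spectrum_eq_toReal_spectralRadius]
  simpa only [hmap, linfty_opNorm_map_ofReal_s4] using
    tendsto_norm_pow_rpow_inv_toReal_spectralRadius (A.map ((↑) : ℝ → ℂ))

theorem trace_pow_rpow_tendsto_specRad {n : ℕ} (A : Matrix (Fin n) (Fin n) ℝ)
    (hA : ∀ i j, 0 < A i j) :
    Tendsto (fun m : ℕ => (Matrix.trace (A ^ m)) ^ ((m : ℝ)⁻¹)) atTop
      (nhds (specRad A)) := by
  have hgelfand := tendsto_linfty_opNorm_pow_rpow_inv_specRad A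
  rcases isEmpty_or_nonempty (Fin n) with hn | hn
  · simpa [Subsingleton.elim (A ^ _) 0] using hgelfand
  obtain ⟨⟨i₀, j₀⟩, hmin⟩ := Finite.exists_min fun p : Fin n × Fin n => A p.1 p.2
  set ε := A i₀ j₀
  have hε : 0 < ε := hA i₀ j₀
  have hn_pos : (0 : ℝ) < n := by exact_mod_cast Fin.pos_iff_nonempty.mpr hn
  have hpow := pow_apply_nonneg fun i j => (hA i j).le
  have hupper := (tendsto_add_atTop_iff_nat 2).mpr
    (hgelfand.const_mul_rpow_inv_natCast (fun _ => norm_nonneg _) hn_pos)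
  have hlower := (hgelfand.const_mul_rpow_inv_natCast (fun _ => norm_nonneg _)
    (by positivity : 0 < n * ε ^ 2)).rpow_inv_natCast_add (fun _ => by positivity) 2
  refine (tendsto_add_atTop_iff_nat 2).mp
    (tendsto_of_tendsto_of_tendsto_of_le_of_le hlower hupper (fun m => ?_) fun m => ?_)
  · have h := card_mul_sq_mul_linfty_opNorm_le_trace_mul_mul (A := A) hε.le
      (fun i j => hmin (i, j)) (hpow m)
    rw [← pow_succ', ← pow_succ, Fintype.card_fin] at h
    exact Real.rpow_le_rpow (by positivity) h (by positivity)
  · have h := (Real.le_norm_self _).trans (norm_trace_le_card_mul_linfty_opNorm (A ^ (m + 2)))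
    rw [Fintype.card_fin] at h
    exact Real.rpow_le_rpow (Finset.sum_nonneg fun i _ => hpow _ i i) h (by positivity)
end

section
/- For all n×n matrices A and B with non-negative real entries and every positive integer k, Tr((A∘B)^{2k}) ≤ Tr(((A∘A)(B∘B))^k), where ∘ denotes the Hadamard product and Tr the trace. -/
open Matrix Filter

/-!
Expanding both traces as sums over closed walks `g 0 → h 0 → g 1 → h 1 → ⋯ → g 0` turns the
left side into `∑ x_w y_w` and the right side into `∑ x_w ^ 2 = ∑ y_w ^ 2`, where
`x_w = ∏ A (g t) (h t) * B (h t) (g (t + 1))` and `y_w` is the same product with `A` and `B`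
swapped; the two sums of squares agree because `tr ((XY)^k) = tr ((YX)^k)`. Hence the inequality
is termwise AM-GM `2 x y ≤ x ^ 2 + y ^ 2`.
-/

namespace Matrix

variable {ι R : Type*} [Fintype ι] [DecidableEq ι]

section CommSemiring

variable [CommSemiring R]

theorem pow_succ_apply_eq_sum_prod (M : Matrix ι ι R) (k : ℕ) (i j : ι) :
    (M ^ (k + 1)) i j =
      ∑ g : Fin k → ι, ∏ t,
        M ((Fin.cons i g : Fin (k + 1) → ι) t) ((Fin.snoc g j : Fin (k + 1) → ι) t) := by
  induction k generalizing i with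
  | zero => simp [Fin.snoc]
  | succ k ih =>
    rw [pow_succ', mul_apply, ← (Fin.consEquiv fun _ => ι).sum_comp, Fintype.sum_prod_type]
    refine Finset.sum_congr rfl fun l _ => ?_
    rw [ih, Finset.mul_sum]
    refine Finset.sum_congr rfl fun g _ => ?_
    simp [Fin.consEquiv, Fin.prod_univ_succ, ← Fin.cons_snoc_eq_snoc_cons]

theorem trace_pow_succ_eq_sum_prod (M : Matrix ι ι R) (k : ℕ) :
    trace (M ^ (k + 1)) = ∑ g : Fin (k + 1) → ι, ∏ t, M (g t) (g (t + 1)) := by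
  rw [trace, ← (Fin.consEquiv fun _ => ι).sum_comp, Fintype.sum_prod_type]
  refine Finset.sum_congr rfl fun i _ => ?_
  rw [diag_apply, pow_succ_apply_eq_sum_prod]
  simp [Fin.consEquiv, Fin.snoc_eq_cons_rotate]

theorem trace_mul_pow_succ_eq_sum_prod (P Q : Matrix ι ι R) (k : ℕ) :
    trace ((P * Q) ^ (k + 1)) =
      ∑ g : Fin (k + 1) → ι, ∑ h : Fin (k + 1) → ι, ∏ t, P (g t) (h t) * Q (h t) (g (t + 1)) := by
  rw [trace_pow_succ_eq_sum_prod]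
  simp only [mul_apply, Finset.prod_univ_sum, Fintype.piFinset_univ]

theorem trace_mul_pow_comm (P Q : Matrix ι ι R) (k : ℕ) :
    trace ((P * Q) ^ k) = trace ((Q * P) ^ k) := by
  cases k with
  | zero => simp
  | succ k => rw [pow_succ, ← Matrix.mul_assoc, mul_pow_mul, trace_mul_comm, ← Matrix.mul_assoc,
      ← pow_succ']

end CommSemiring

theorem two_mul_trace_hadamard_mul_pow_le [CommRing R] [LinearOrder R] [IsStrictOrderedRing R]
    (P₁ P₂ Q₁ Q₂ : Matrix ι ι R) (k : ℕ) :
    2 * trace ((P₁ ⊙ P₂ * (Q₁ ⊙ Q₂)) ^ k) ≤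
      trace ((P₁ ⊙ P₁ * (Q₁ ⊙ Q₁)) ^ k) + trace ((P₂ ⊙ P₂ * (Q₂ ⊙ Q₂)) ^ k) := by
  cases k with
  | zero => simp [two_mul]
  | succ k =>
    simp only [trace_mul_pow_succ_eq_sum_prod, Finset.mul_sum, ← Finset.sum_add_distrib]
    refine Finset.sum_le_sum fun g _ => Finset.sum_le_sum fun h _ => ?_
    set x := ∏ t, P₁ (g t) (h t) * Q₁ (h t) (g (t + 1))
    set y := ∏ t, P₂ (g t) (h t) * Q₂ (h t) (g (t + 1))
    have hxy : ∏ t, (P₁ ⊙ P₂) (g t) (h t) * (Q₁ ⊙ Q₂) (h t) (g (t + 1)) = x * y := by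
      simp only [x, y, hadamard_apply, ← Finset.prod_mul_distrib]
      exact Finset.prod_congr rfl fun _ _ => by ring
    have hsq : ∀ (P Q : Matrix ι ι R),
        ∏ t, (P ⊙ P) (g t) (h t) * (Q ⊙ Q) (h t) (g (t + 1)) =
          (∏ t, P (g t) (h t) * Q (h t) (g (t + 1))) ^ 2 := fun P Q => by
      simp only [hadamard_apply, ← Finset.prod_pow]
      exact Finset.prod_congr rfl fun _ _ => by ring
    rw [hxy, hsq, hsq, ← mul_assoc]
    exact two_mul_le_add_sq x y

end Matrix

theorem trace_hadamard_pow_le_general {n : ℕ} (A B : Matrix (Fin n) (Fin n) ℝ) (k : ℕ) :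
    Matrix.trace ((A.hadamard B) ^ (2 * k)) ≤
      Matrix.trace (((A.hadamard A) * (B.hadamard B)) ^ k) := by
  have h := two_mul_trace_hadamard_mul_pow_le A B B A k
  rw [hadamard_comm B A, trace_mul_pow_comm (B ⊙ B)] at h
  rw [pow_mul, sq]
  linarith

theorem trace_hadamard_pow_le {n : ℕ} (A B : Matrix (Fin n) (Fin n) ℝ)
    (hA : ∀ i j, 0 ≤ A i j) (hB : ∀ i j, 0 ≤ B i j) (k : ℕ) (hk : 0 < k) :
    Matrix.trace ((A.hadamard B) ^ (2 * k)) ≤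
      Matrix.trace (((A.hadamard A) * (B.hadamard B)) ^ k) :=
  trace_hadamard_pow_le_general A B k
end

section
/- For all n×n matrices A and B with non-negative real entries and every positive integer k, Tr(((A∘A)(B∘B))^k) ≤ Tr((AB)^{2k}), where ∘ denotes the Hadamard product and Tr the trace. -/
open Matrix Filter

/-!
For entrywise non-negative matrices, Cauchy–Schwarz in the form `∑ x_l² y_l² ≤ (∑ x_l y_l)²`
gives `(A ∘ A)(B ∘ B) ≤ (AB) ∘ (AB)` entrywise. Since the product of non-negative matrices is
monotone in each factor, induction on `k` gives `((A ∘ A)(B ∘ B))^k ≤ C^k ∘ C^k` with `C = AB`.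
Finally `Tr (X ∘ X) = ∑ X_ii² ≤ ∑_{i,j} X_ij X_ji = Tr (X²)` for non-negative `X = C^k`.
-/

namespace Matrix

variable {l m n R : Type*} [CommSemiring R] [PartialOrder R] [IsOrderedRing R]

section Rectangular

variable [Fintype m]

lemma mul_apply_nonneg_s7 {A : Matrix l m R} {B : Matrix m n R}
    (hA : ∀ i j, 0 ≤ A i j) (hB : ∀ i j, 0 ≤ B i j) (i : l) (j : n) :
    0 ≤ (A * B) i j :=
  Finset.sum_nonneg fun k _ => mul_nonneg (hA i k) (hB k j)

lemma mul_apply_le_mul_apply {A A' : Matrix l m R} {B B' : Matrix m n R}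
    (hAA' : ∀ i j, A i j ≤ A' i j) (hBB' : ∀ i j, B i j ≤ B' i j)
    (hA' : ∀ i j, 0 ≤ A' i j) (hB : ∀ i j, 0 ≤ B i j) (i : l) (j : n) :
    (A * B) i j ≤ (A' * B') i j :=
  Finset.sum_le_sum fun k _ => mul_le_mul (hAA' i k) (hBB' k j) (hB k j) (hA' i k)

lemma hadamard_self_mul_hadamard_self_apply_le {A : Matrix l m R} {B : Matrix m n R}
    (hA : ∀ i j, 0 ≤ A i j) (hB : ∀ i j, 0 ≤ B i j) (i : l) (j : n) :
    ((A ⊙ A) * (B ⊙ B)) i j ≤ ((A * B) ⊙ (A * B)) i j := by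
  have hCS := Finset.sum_sq_le_sq_sum_of_nonneg (s := Finset.univ)
    (fun k _ => mul_nonneg (hA i k) (hB k j))
  calc ((A ⊙ A) * (B ⊙ B)) i j = ∑ k, (A i k * B k j) ^ 2 := by
        simp only [mul_apply, hadamard_apply]
        exact Finset.sum_congr rfl fun k _ => by ring
    _ ≤ (∑ k, A i k * B k j) ^ 2 := hCS
    _ = ((A * B) ⊙ (A * B)) i j := by rw [hadamard_apply, mul_apply, sq]

end Rectangular

variable [Fintype n]

lemma trace_hadamard_self_le_trace_mul_self {C : Matrix n n R} (hC : ∀ i j, 0 ≤ C i j) :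
    trace (C ⊙ C) ≤ trace (C * C) :=
  Finset.sum_le_sum fun i _ =>
    Finset.single_le_sum (f := fun j => C i j * C j i)
      (fun j _ => mul_nonneg (hC i j) (hC j i)) (Finset.mem_univ i)

variable [DecidableEq n]

lemma pow_apply_le_hadamard_self_pow_apply {N C : Matrix n n R}
    (hN : ∀ i j, 0 ≤ N i j) (hC : ∀ i j, 0 ≤ C i j) (hNC : ∀ i j, N i j ≤ (C ⊙ C) i j) (k : ℕ) :
    ∀ i j, (N ^ k) i j ≤ ((C ^ k) ⊙ (C ^ k)) i j := by
  induction k with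
  | zero => intro i j; rw [pow_zero, pow_zero, hadamard_one, diag_one]; rfl
  | succ k ih =>
    have hCk := pow_apply_nonneg hC k
    intro i j
    calc (N ^ (k + 1)) i j ≤ (((C ^ k) ⊙ (C ^ k)) * (C ⊙ C)) i j := by
          rw [pow_succ]
          exact mul_apply_le_mul_apply ih hNC (fun i j => mul_nonneg (hCk i j) (hCk i j)) hN i j
      _ ≤ ((C ^ (k + 1)) ⊙ (C ^ (k + 1))) i j := by
          rw [pow_succ]
          exact hadamard_self_mul_hadamard_self_apply_le hCk hC i j

end Matrix

theorem trace_hadamard_sq_pow_le_general {n : ℕ} (A B : Matrix (Fin n) (Fin n) ℝ)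
    (hA : ∀ i j, 0 ≤ A i j) (hB : ∀ i j, 0 ≤ B i j) (k : ℕ) :
    Matrix.trace (((A.hadamard A) * (B.hadamard B)) ^ k) ≤
      Matrix.trace ((A * B) ^ (2 * k)) := by
  have hAB := mul_apply_nonneg_s7 hA hB
  have hAA : ∀ i j, 0 ≤ (A ⊙ A) i j := fun i j => mul_nonneg (hA i j) (hA i j)
  have hBB : ∀ i j, 0 ≤ (B ⊙ B) i j := fun i j => mul_nonneg (hB i j) (hB i j)
  calc trace ((A ⊙ A * (B ⊙ B)) ^ k) ≤ trace (((A * B) ^ k) ⊙ ((A * B) ^ k)) :=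
        Finset.sum_le_sum fun i _ =>
          pow_apply_le_hadamard_self_pow_apply (mul_apply_nonneg_s7 hAA hBB) hAB
            (hadamard_self_mul_hadamard_self_apply_le hA hB) k i i
    _ ≤ trace ((A * B) ^ k * (A * B) ^ k) :=
        trace_hadamard_self_le_trace_mul_self (pow_apply_nonneg hAB k)
    _ = trace ((A * B) ^ (2 * k)) := by rw [two_mul, pow_add]

theorem trace_hadamard_sq_pow_le {n : ℕ} (A B : Matrix (Fin n) (Fin n) ℝ)
    (hA : ∀ i j, 0 ≤ A i j) (hB : ∀ i j, 0 ≤ B i j) (k : ℕ) (hk : 0 < k) :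
    Matrix.trace (((A.hadamard A) * (B.hadamard B)) ^ k) ≤
      Matrix.trace ((A * B) ^ (2 * k)) :=
  trace_hadamard_sq_pow_le_general A B hA hB k
end

section
/- There is no lower bound on ρ(A∘B) in terms of ρ(AB) even for non-negative matrices with nonzero spectral radius: for the matrices A = [[1,x],[0,1]] and B = [[1,0],[y,1]] with x, y > 0, one has ρ(A) = ρ(B) = ρ(A∘B) = 1, while ρ(AB) ≥ 1 + xy/2, so ρ(AB) is unbounded as xy → ∞. -/
open Matrix Filter

/-!
The spectrum of a triangular matrix is the set of its diagonal entries, so the spectral radius of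
`A`, of `B` and of the upper triangular `A ∘ B`, all with unit diagonal, is `1`. On the other
hand the trace is the sum of the `n` complex eigenvalues counted with multiplicity, so
`|tr M| ≤ n ρ(M)`; since `tr (A * B) = 2 + x y`, this gives `ρ(A * B) ≥ 1 + x y / 2`.
-/

open Polynomial

namespace Matrix

variable {ι K : Type*} [Fintype ι] [DecidableEq ι] [LinearOrder ι] [Field K]

theorem spectrum_eq_range_diag_of_isUpperTriangular {M : Matrix ι ι K}
    (hM : M.IsUpperTriangular) : spectrum K M = Set.range M.diag := by
  ext μ
  rw [mem_spectrum_iff_isRoot_charpoly, charpoly_of_isUpperTriangular M hM, IsRoot.def, eval_prod,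
    Finset.prod_eq_zero_iff]
  simp [sub_eq_zero, eq_comm]

theorem spectrum_eq_range_diag_of_isLowerTriangular {M : Matrix ι ι K}
    (hM : M.IsLowerTriangular) : spectrum K M = Set.range M.diag := by
  have hMt : Mᵀ.IsUpperTriangular := fun _ _ h => hM h
  ext μ
  rw [mem_spectrum_iff_isRoot_charpoly, ← charpoly_transpose, ← mem_spectrum_iff_isRoot_charpoly,
    spectrum_eq_range_diag_of_isUpperTriangular hMt, diag_transpose]

end Matrix

section SpecRad

variable {n : ℕ}

theorem norm_le_specRad (A : Matrix (Fin n) (Fin n) ℝ) {μ : ℂ}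
    (hμ : μ ∈ spectrum ℂ (A.map (fun a => (a : ℂ)))) : ‖μ‖ ≤ specRad A :=
  le_csSup ((finite_spectrum _).image (‖·‖)).bddAbove ⟨μ, hμ, rfl⟩

theorem specRad_eq_iSup_abs_diag_of_spectrum_eq {A : Matrix (Fin n) (Fin n) ℝ}
    (hA : spectrum ℂ (A.map (fun a => (a : ℂ))) = Set.range (A.map (fun a => (a : ℂ))).diag) :
    specRad A = ⨆ i, |A i i| := by
  rw [specRad, iSup, hA]
  congr 1
  ext r
  simp [Complex.norm_real]

theorem specRad_eq_iSup_abs_diag_of_isUpperTriangular {A : Matrix (Fin n) (Fin n) ℝ}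
    (hA : A.IsUpperTriangular) : specRad A = ⨆ i, |A i i| :=
  specRad_eq_iSup_abs_diag_of_spectrum_eq <|
    spectrum_eq_range_diag_of_isUpperTriangular fun _ _ h => by simp [hA h]

theorem specRad_eq_iSup_abs_diag_of_isLowerTriangular {A : Matrix (Fin n) (Fin n) ℝ}
    (hA : A.IsLowerTriangular) : specRad A = ⨆ i, |A i i| :=
  specRad_eq_iSup_abs_diag_of_spectrum_eq <|
    spectrum_eq_range_diag_of_isLowerTriangular fun _ _ h => by simp [hA h]

theorem abs_trace_le_mul_specRad (A : Matrix (Fin n) (Fin n) ℝ) :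
    |A.trace| ≤ n * specRad A := by
  set Ac := A.map (fun a => (a : ℂ))
  have htrace : (A.trace : ℂ) = Ac.charpoly.roots.sum := by
    rw [← trace_eq_sum_roots_charpoly]
    exact AddMonoidHom.map_trace Complex.ofRealHom A
  have hcard : Ac.charpoly.roots.card = n := by
    rw [IsAlgClosed.card_roots_eq_natDegree, charpoly_natDegree_eq_dim, Fintype.card_fin]
  calc |A.trace| = ‖Ac.charpoly.roots.sum‖ := by rw [← htrace, Complex.norm_real, Real.norm_eq_abs]
    _ ≤ (Ac.charpoly.roots.map (‖·‖)).sum := norm_multiset_sum_le _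
    _ ≤ (Ac.charpoly.roots.map (‖·‖)).card • specRad A :=
        Multiset.sum_le_card_nsmul _ _ fun r hr => by
          obtain ⟨μ, hμ, rfl⟩ := Multiset.mem_map.mp hr
          exact norm_le_specRad A (mem_spectrum_iff_isRoot_charpoly.mpr (isRoot_of_mem_roots hμ))
    _ = n * specRad A := by rw [Multiset.card_map, hcard, nsmul_eq_mul]

end SpecRad

theorem no_lower_bound_on_specRad_hadamard_general (x y : ℝ) :
    let A : Matrix (Fin 2) (Fin 2) ℝ := !![1, x; 0, 1]
    let B : Matrix (Fin 2) (Fin 2) ℝ := !![1, 0; y, 1]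
    specRad A = 1 ∧ specRad B = 1 ∧ specRad (A.hadamard B) = 1 ∧
      1 + x * y / 2 ≤ specRad (A * B) := by
  intro A B
  have hA : A.IsUpperTriangular := by
    intro i j h; fin_cases i <;> fin_cases j <;> simp_all [A]
  have hB : B.IsLowerTriangular := by
    intro i j (h : i < j); fin_cases i <;> fin_cases j <;> simp_all [B]
  have hHad : (A.hadamard B).IsUpperTriangular := fun i j h => by simp [hA h]
  have hdiag : ∀ i, A i i = 1 ∧ B i i = 1 := by
    intro i; fin_cases i <;> simp [A, B]
  refine ⟨?_, ?_, ?_, ?_⟩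
  · simp [specRad_eq_iSup_abs_diag_of_isUpperTriangular hA, hdiag]
  · simp [specRad_eq_iSup_abs_diag_of_isLowerTriangular hB, hdiag]
  · simp [specRad_eq_iSup_abs_diag_of_isUpperTriangular hHad, hdiag]
  · have htrace : (A * B).trace = 2 + x * y := by
      simp only [A, B, mul_fin_two, trace_fin_two, of_apply, cons_val', cons_val_zero, cons_val_one,
        empty_val', cons_val_fin_one]
      ring
    have hbound := abs_trace_le_mul_specRad (A * B)
    rw [htrace, Nat.cast_ofNat] at hbound
    linarith [le_abs_self (2 + x * y)]

theorem no_lower_bound_on_specRad_hadamard (x y : ℝ) (hx : 0 < x) (hy : 0 < y) :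
    let A : Matrix (Fin 2) (Fin 2) ℝ := !![1, x; 0, 1]
    let B : Matrix (Fin 2) (Fin 2) ℝ := !![1, 0; y, 1]
    specRad A = 1 ∧ specRad B = 1 ∧ specRad (A.hadamard B) = 1 ∧
      1 + x * y / 2 ≤ specRad (A * B) :=
  no_lower_bound_on_specRad_hadamard_general x y
end
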